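/- arXiv:0812.2399 — 2 statements merged into one kernel-verified Lean document; each statement's English description precedes it below -/
import Mathlib

section
/- Let G=(V,E) be a finite graph with DaC measure P^G with parameters p∈[0,1], q>0, s, (a_1,…,a_s), and fix σ∈S^V. For each i∈S let G^{σ,i}=(V^{σ,i},E^{σ,i}) be the subgraph induced by vertices with σ-spin i. Then, conditionally on the spin configuration equaling σ, the edge configuration on each E^{σ,i} is distributed as the random-cluster measure Φ^{G^{σ,i}}_{p,q·a_i}, independently over i∈S, and all edges between differently-colored vertices are closed. Equivalently, for any η closing all edges of E^{σ,diff}, P^G((σ,η) | spins = σ) = ∏_{i=1}^s Φ^{G^{σ,i}}_{p,qa_i}(η restricted to E^{σ,i}). -/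
open Finset

/-- The relation on vertices generated by the open edges of a bond configuration `η`. -/
def openRel {V E : Type} (ends : E → V × V) (η : E → Bool) (x y : V) : Prop :=
  ∃ e, η e = true ∧ (ends e).1 = x ∧ (ends e).2 = y

/-- The number of connected components of the graph `(V, {e : η e = 1})`. -/
noncomputable def numComp {V E : Type} (ends : E → V × V) (η : E → Bool) : ℕ :=
  Nat.card (Quot (openRel ends η))

/-- The unnormalized random-cluster weight `q^{k(η)} ∏_e p^{η(e)}(1-p)^{1-η(e)}`. -/
noncomputable def rcWeight {V E : Type} [Fintype E] (ends : E → V × V) (p q : ℝ)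
    (η : E → Bool) : ℝ :=
  q ^ numComp ends η * ∏ e : E, (if η e then p else 1 - p)

/-- The random-cluster normalizing constant `Z^G_{p,q}`. -/
noncomputable def rcZ {V E : Type} [Fintype E] [DecidableEq E] (ends : E → V × V)
    (p q : ℝ) : ℝ :=
  ∑ η : E → Bool, rcWeight ends p q η

/-- The random-cluster measure `Φ^G_{p,q}` on `{0,1}^E`. -/
noncomputable def rcMeasure {V E : Type} [Fintype E] [DecidableEq E] (ends : E → V × V)
    (p q : ℝ) (η : E → Bool) : ℝ :=
  rcWeight ends p q η / rcZ ends p q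

/-- A spin configuration `σ` is constant on each connected component of `η`. -/
def compatible {V E : Type} (ends : E → V × V) (η : E → Bool) {s : ℕ}
    (σ : V → Fin s) : Prop :=
  ∀ x y, Relation.EqvGen (openRel ends η) x y → σ x = σ y

/-- The number `k^{σ,i}(η)` of connected components of `η` containing a vertex of spin `i`. -/
noncomputable def spinCompCount {V E : Type} (ends : E → V × V) (η : E → Bool) {s : ℕ}
    (σ : V → Fin s) (i : Fin s) : ℕ :=
  Nat.card {c : Quot (openRel ends η) // ∃ x, Quot.mk (openRel ends η) x = c ∧ σ x = i}

open Classical in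
/-- The divide-and-color measure `P^G` on `S^V × {0,1}^E`. -/
noncomputable def dacP {V E : Type} [Fintype E] [DecidableEq E] (ends : E → V × V)
    (p q : ℝ) {s : ℕ} (a : Fin s → ℝ) (σ : V → Fin s) (η : E → Bool) : ℝ :=
  if compatible ends η σ then
    rcMeasure ends p q η * ∏ i : Fin s, (a i) ^ spinCompCount ends η σ i
  else 0

/-- The endpoint map of the subgraph `G^{σ,i}` induced by the vertices of spin `i`. -/
def subEnds {V E : Type} (ends : E → V × V) {s : ℕ} (σ : V → Fin s) (i : Fin s) :
    {e : E // σ (ends e).1 = i ∧ σ (ends e).2 = i} → {v : V // σ v = i} × {v : V // σ v = i} :=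
  fun e => (⟨(ends e.1).1, e.2.1⟩, ⟨(ends e.1).2, e.2.2⟩)


section DaCAux

open Classical

variable {V E : Type} (ends : E → V × V) {s : ℕ} (σ : V → Fin s)

lemma openRel_spin_eq {η : E → Bool}
    (hη : ∀ e : E, σ (ends e).1 ≠ σ (ends e).2 → η e = false)
    {x y : V} (h : Relation.EqvGen (openRel ends η) x y) : σ x = σ y := by
  induction h with
  | rel x y hxy =>
      obtain ⟨e, he, h1, h2⟩ := hxy
      subst h1; subst h2
      by_contra hne
      simp [hη e hne] at he
  | refl x => rfl
  | symm _ _ _ ih => exact ih.symm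
  | trans _ _ _ _ _ ih1 ih2 => exact ih1.trans ih2

lemma compatible_of_closed {η : E → Bool}
    (hη : ∀ e : E, σ (ends e).1 ≠ σ (ends e).2 → η e = false) :
    compatible ends η σ :=
  fun _ _ h => openRel_spin_eq ends σ hη h

lemma eqvGen_sub {η : E → Bool}
    (hη : ∀ e : E, σ (ends e).1 ≠ σ (ends e).2 → η e = false) (i : Fin s)
    {u v : V} (h : Relation.EqvGen (openRel ends η) u v) :
    ∀ (hu : σ u = i) (hv : σ v = i),
      Relation.EqvGen (openRel (subEnds ends σ i) (fun e => η e.1)) ⟨u, hu⟩ ⟨v, hv⟩ := by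
  induction h with
  | rel x y hxy =>
      intro hu hv
      obtain ⟨e, he, h1, h2⟩ := hxy
      exact Relation.EqvGen.rel _ _
        ⟨⟨e, by rw [h1]; exact hu, by rw [h2]; exact hv⟩, he,
          Subtype.ext h1, Subtype.ext h2⟩
  | refl x => intro hu hv; exact Relation.EqvGen.refl _
  | symm x y hxy ih =>
      intro hu hv
      exact Relation.EqvGen.symm _ _ (ih hv hu)
  | trans x y z hxy hyz ih1 ih2 =>
      intro hu hv
      have hy : σ y = i := by rw [← openRel_spin_eq ends σ hη hxy]; exact hu
      exact Relation.EqvGen.trans _ _ _ (ih1 hu hy) (ih2 hy hv)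

lemma spinCompCount_eq {η : E → Bool}
    (hη : ∀ e : E, σ (ends e).1 ≠ σ (ends e).2 → η e = false) (i : Fin s) :
    spinCompCount ends η σ i = numComp (subEnds ends σ i) (fun e => η e.1) := by
  unfold spinCompCount numComp
  refine (Nat.card_congr (Equiv.ofBijective ?_ ⟨?_, ?_⟩)).symm
  · refine Quot.lift
      (fun x : {v : V // σ v = i} =>
        (⟨Quot.mk (openRel ends η) x.1, x.1, rfl, x.2⟩ :
          {c : Quot (openRel ends η) // ∃ x, Quot.mk (openRel ends η) x = c ∧ σ x = i}))
      ?_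
    rintro a b ⟨e, he, h1, h2⟩
    exact Subtype.ext (Quot.sound ⟨e.1, he, congrArg Subtype.val h1, congrArg Subtype.val h2⟩)
  · intro c d
    induction c using Quot.ind with
    | _ x =>
    induction d using Quot.ind with
    | _ y =>
    intro hcd
    have hxy : Quot.mk (openRel ends η) x.1 = Quot.mk (openRel ends η) y.1 :=
      congrArg Subtype.val hcd
    exact Quot.eq.mpr (eqvGen_sub ends σ hη i (Quot.eq.mp hxy) x.2 y.2)
  · rintro ⟨c, x, hxc, hσx⟩
    exact ⟨Quot.mk _ ⟨x, hσx⟩, Subtype.ext hxc⟩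

lemma numComp_eq_sum [Finite V] {η : E → Bool}
    (hcomp : compatible ends η σ) :
    numComp ends η = ∑ i : Fin s, spinCompCount ends η σ i := by
  classical
  have : Fintype (Quot (openRel ends η)) := Fintype.ofFinite _
  set τ : Quot (openRel ends η) → Fin s :=
    Quot.lift σ (fun a b h => hcomp a b (Relation.EqvGen.rel _ _ h)) with hτ
  have h1 : numComp ends η = Nat.card ((i : Fin s) × {c // τ c = i}) :=
    Nat.card_congr (Equiv.sigmaFiberEquiv τ).symm
  rw [h1, Nat.card_eq_fintype_card, Fintype.card_sigma]
  refine Finset.sum_congr rfl fun i _ => ?_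
  unfold spinCompCount
  rw [Nat.card_eq_fintype_card]
  refine Fintype.card_congr (Equiv.subtypeEquivRight fun c => ?_)
  constructor
  · intro h
    obtain ⟨x, rfl⟩ := Quot.exists_rep c
    exact ⟨x, rfl, h⟩
  · rintro ⟨x, rfl, hx⟩
    exact hx

lemma prod_weight_split [Fintype E] [DecidableEq E] (p : ℝ) {η : E → Bool}
    (hη : ∀ e : E, σ (ends e).1 ≠ σ (ends e).2 → η e = false) :
    ∏ e : E, (if η e then p else 1 - p)
      = (1 - p) ^ (Finset.univ.filter
            (fun e : E => ¬ σ (ends e).1 = σ (ends e).2)).card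
        * ∏ i : Fin s, ∏ e : {e : E // σ (ends e).1 = i ∧ σ (ends e).2 = i},
            (if η e.1 then p else 1 - p) := by
  classical
  rw [← Finset.prod_filter_mul_prod_filter_not Finset.univ
    (fun e : E => σ (ends e).1 = σ (ends e).2) (fun e => if η e then p else 1 - p)]
  rw [mul_comm]
  congr 1
  · rw [Finset.prod_congr rfl (fun e he => ?_), Finset.prod_const]
    rw [Finset.mem_filter] at he
    rw [hη e he.2]
    simp
  · rw [← Finset.prod_fiberwise_of_maps_to
      (g := fun e : E => σ (ends e).1) (t := Finset.univ)
      (fun e _ => Finset.mem_univ _) (fun e => if η e then p else 1 - p)]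
    refine Finset.prod_congr rfl fun i _ => ?_
    rw [Finset.filter_filter]
    rw [← Finset.prod_subtype (Finset.univ.filter
        (fun e : E => σ (ends e).1 = σ (ends e).2 ∧ σ (ends e).1 = i))
        (p := fun e : E => σ (ends e).1 = i ∧ σ (ends e).2 = i) (fun e => ?_)
        (fun e => if η e then p else 1 - p)]
    simp only [Finset.mem_filter, Finset.mem_univ, true_and]
    constructor
    · rintro ⟨h1, h2⟩
      exact ⟨h2, h1 ▸ h2⟩
    · rintro ⟨h1, h2⟩
      exact ⟨h1.trans h2.symm, h1⟩

lemma dacP_eq [Finite V] [Fintype E] [DecidableEq E] (p q : ℝ) (a : Fin s → ℝ)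
    {η : E → Bool}
    (hη : ∀ e : E, σ (ends e).1 ≠ σ (ends e).2 → η e = false) :
    dacP ends p q a σ η
      = ((1 - p) ^ (Finset.univ.filter
            (fun e : E => ¬ σ (ends e).1 = σ (ends e).2)).card / rcZ ends p q)
        * ∏ i : Fin s, rcWeight (subEnds ends σ i) p (q * a i) (fun e => η e.1) := by
  classical
  unfold dacP
  rw [if_pos (compatible_of_closed ends σ hη)]
  unfold rcMeasure rcWeight
  rw [numComp_eq_sum ends σ (compatible_of_closed ends σ hη)]
  rw [prod_weight_split ends σ p hη]
  simp only [spinCompCount_eq ends σ hη]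
  simp only [mul_pow, Finset.prod_mul_distrib, Finset.prod_pow_eq_pow_sum]
  ring

lemma sum_dacP [Finite V] [Fintype E] [DecidableEq E] (p q : ℝ) (a : Fin s → ℝ) :
    ∑ η' : E → Bool, dacP ends p q a σ η'
      = ((1 - p) ^ (Finset.univ.filter
            (fun e : E => ¬ σ (ends e).1 = σ (ends e).2)).card / rcZ ends p q)
        * ∏ i : Fin s, rcZ (subEnds ends σ i) p (q * a i) := by
  classical
  set C : ℝ := (1 - p) ^ (Finset.univ.filter
      (fun e : E => ¬ σ (ends e).1 = σ (ends e).2)).card / rcZ ends p q with hC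
  have h0 : ∀ η' : E → Bool, dacP ends p q a σ η' =
      if ∀ e : E, σ (ends e).1 ≠ σ (ends e).2 → η' e = false
      then C * ∏ i : Fin s, rcWeight (subEnds ends σ i) p (q * a i) (fun e => η' e.1)
      else 0 := by
    intro η'
    split
    next h => exact dacP_eq ends σ p q a h
    next h =>
      push_neg at h
      obtain ⟨e, hne, hte⟩ := h
      unfold dacP
      rw [if_neg]
      intro hcomp
      exact hne (hcomp (ends e).1 (ends e).2
        (Relation.EqvGen.rel _ _ ⟨e, Bool.not_eq_false _ ▸ hte, rfl, rfl⟩))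
  simp_rw [h0]
  rw [← Finset.sum_filter]
  have hsum : ∑ η' ∈ Finset.univ.filter
      (fun η' : E → Bool => ∀ e : E, σ (ends e).1 ≠ σ (ends e).2 → η' e = false),
      C * ∏ i : Fin s, rcWeight (subEnds ends σ i) p (q * a i) (fun e => η' e.1)
    = ∑ g : (i : Fin s) → ({e : E // σ (ends e).1 = i ∧ σ (ends e).2 = i} → Bool),
      C * ∏ i : Fin s, rcWeight (subEnds ends σ i) p (q * a i) (g i) := by
    refine Finset.sum_nbij'
      (fun η' i e => η' e.1)
      (fun g e => if h : σ (ends e).2 = σ (ends e).1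
        then g (σ (ends e).1) ⟨e, rfl, h⟩ else false)
      (fun _ _ => Finset.mem_univ _) ?_ ?_ ?_ ?_
    · intro g _
      simp only [Finset.mem_filter, Finset.mem_univ, true_and]
      intro e hne
      rw [dif_neg (fun h => hne h.symm)]
    · intro η' hη'
      simp only [Finset.mem_filter, Finset.mem_univ, true_and] at hη'
      funext e
      try beta_reduce
      by_cases h : σ (ends e).2 = σ (ends e).1
      · rw [dif_pos h]
      · rw [dif_neg h]
        exact (hη' e (fun h' => h h'.symm)).symm
    · intro g _
      funext i e
      obtain ⟨e, h1, h2⟩ := e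
      subst h1
      try beta_reduce
      rw [dif_pos h2]
    · intro η' _
      rfl
  rw [hsum, ← Finset.mul_sum]
  congr 1
  have := Finset.prod_univ_sum
    (t := fun i : Fin s => (Finset.univ :
      Finset ({e : E // σ (ends e).1 = i ∧ σ (ends e).2 = i} → Bool)))
    (f := fun i g => rcWeight (subEnds ends σ i) p (q * a i) g)
  rw [Fintype.piFinset_univ] at this
  rw [← this]
  rfl

end DaCAux

/-- conditionally on the spin configuration equaling `σ`, the DaC
edge configuration closes all edges between differently colored vertices and is
distributed, independently over the spins `i`, as the random-cluster measure
`Φ^{G^{σ,i}}_{p, q·a_i}` on the monochromatic subgraphs: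
`P^G((σ,η) | spins = σ) = ∏ i, Φ^{G^{σ,i}}_{p,qa_i}(η|_{E^{σ,i}})` for every `η`
closing all of `E^{σ,diff}`. -/
theorem dac_conditional_edge_distribution {V E : Type}
    [Fintype V] [DecidableEq V] [Fintype E] [DecidableEq E]
    (ends : E → V × V) (p q : ℝ) (hp : p ∈ Set.Icc (0 : ℝ) 1) (hq : 0 < q)
    (s : ℕ) (hs : 2 ≤ s) (a : Fin s → ℝ) (ha : ∀ i, a i ∈ Set.Ioo (0 : ℝ) 1)
    (hsum : ∑ i : Fin s, a i = 1)
    (σ : V → Fin s) (η : E → Bool)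
    (hη : ∀ e : E, σ (ends e).1 ≠ σ (ends e).2 → η e = false)
    (hpos : 0 < ∑ η' : E → Bool, dacP ends p q a σ η') :
    dacP ends p q a σ η / (∑ η' : E → Bool, dacP ends p q a σ η')
      = ∏ i : Fin s, rcMeasure (subEnds ends σ i) p (q * a i) (fun e => η e.1) := by
  classical
  rw [dacP_eq ends σ p q a hη, sum_dacP ends σ p q a]
  rw [sum_dacP ends σ p q a] at hpos
  have hC : ((1 - p) ^ (Finset.univ.filter
      (fun e : E => ¬ σ (ends e).1 = σ (ends e).2)).card / rcZ ends p q) ≠ 0 := by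
    intro h
    rw [h, zero_mul] at hpos
    exact lt_irrefl 0 hpos
  rw [mul_div_mul_left _ _ hC, ← Finset.prod_div_distrib]
  rfl
end

section
/- Let G=(V,E) be a finite graph, S={1,…,s}, and fix parameters p∈[0,1), q>0, a_1,…,a_s∈(0,1) summing to 1. For any vertex v∈V, any spin m∈S, and any σ∈S^{V∖{v}}, the conditional probability under the DaC measure that v gets spin m given that the spins on V∖{v} equal σ is at least ε = (min_i a_i)·(min{1-p, 1-p/(p+(1-p)q·min_i a_i)})^{deg(v)} > 0. -/
/-
On compatible pairs the DaC weight is `rcWeight η * ∏ i, a i ^ k^{σ,i}(η)`, up to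
the constant `rcZ`. Opening a closed edge `e` multiplies this weight by `p / (1 - p)` when the
endpoints of `e` are already connected, and by `p / ((1 - p) q a_i)` otherwise, `i` being their
spin (one component of spin `i` disappears). Hence closing `e` keeps at least the fraction
`c = min (1 - p) (1 - p / (p + (1 - p) q a_min))` of the weight of the pair `{η, η ∪ e}`, and
closing the `deg v` edges at `v` one at a time keeps the fraction `c ^ deg v` of the total weight,
for every spin at `v`. Once `v` is isolated its spin `b` only contributes the factor `a b`, so
spin `m` carries the fraction `a m ≥ a_min` of what is left.
-/

open Finset

open Function Relation

theorem Set.ncard_eq_ncard_sdiff_singleton_add_ite {α : Type*} [Finite α] (S : Set α) (a : α)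
    [Decidable (a ∈ S)] : S.ncard = (S \ {a}).ncard + if a ∈ S then 1 else 0 := by
  split_ifs with h
  · exact (Set.ncard_sdiff_singleton_add_one h).symm
  · rw [Set.sdiff_singleton_eq_self h, add_zero]

theorem Set.ncard_preimage_of_injOn_compl_singleton {α β : Type*} [Finite α] {f : α → β}
    (hf : Surjective f) {a₁ a₂ : α} (hne : a₁ ≠ a₂) (heq : f a₁ = f a₂)
    (hinj : Set.InjOn f {a₂}ᶜ) (S : Set β) [Decidable (f a₂ ∈ S)] :
    (f ⁻¹' S).ncard = S.ncard + if f a₂ ∈ S then 1 else 0 := by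
  rw [@Set.ncard_eq_ncard_sdiff_singleton_add_ite _ _ (f ⁻¹' S) a₂ ‹_›]
  congr 1
  have himage : f '' (f ⁻¹' S \ {a₂}) = S := by
    refine Set.Subset.antisymm (by rintro _ ⟨a, ⟨ha, -⟩, rfl⟩; exact ha) fun b hb => ?_
    obtain ⟨a, rfl⟩ := hf b
    by_cases ha : a = a₂
    · subst ha
      exact ⟨a₁, ⟨Set.mem_preimage.2 (heq ▸ hb), hne⟩, heq⟩
    · exact ⟨a, ⟨hb, ha⟩, rfl⟩
  rw [← (hinj.mono fun a ha => ha.2).ncard_image, himage]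

theorem Finset.prod_pow_add_ite {ι M : Type*} [Fintype ι] [DecidableEq ι] [CommMonoid M]
    (a : ι → M) (k : ι → ℕ) (t : ι) :
    ∏ i, a i ^ (k i + if t = i then 1 else 0) = a t * ∏ i, a i ^ k i := by
  simp only [pow_add, Finset.prod_mul_distrib, pow_ite, pow_one, pow_zero, Finset.prod_ite_eq,
    Finset.mem_univ, if_true]
  exact mul_comm _ _

section Components

variable {V E : Type}

theorem openRel_mono {ends : E → V × V} {η η' : E → Bool} (h : ∀ e, η e = true → η' e = true)
    {u w : V} :
    openRel ends η u w → openRel ends η' u w :=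
  fun ⟨e, he, hu, hw⟩ => ⟨e, h e he, hu, hw⟩

theorem compatible.exists_mk_eq_iff {ends : E → V × V} {s : ℕ} {σ : V → Fin s} {η : E → Bool}
    (hσ : compatible ends η σ) (z : V) (i : Fin s) :
    (∃ z', Quot.mk (openRel ends η) z' = Quot.mk _ z ∧ σ z' = i) ↔ σ z = i :=
  ⟨fun ⟨_, hz', hi⟩ => hi ▸ (hσ _ _ (Quot.eq.mp hz')).symm, fun hi => ⟨z, rfl, hi⟩⟩

theorem compatible_of_forall_false (ends : E → V × V) {s : ℕ} (σ : V → Fin s) :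
    compatible ends (fun _ => false) σ := by
  intro u w h
  induction h with
  | rel _ _ h => obtain ⟨_, h, -⟩ := h; exact absurd h Bool.false_ne_true
  | refl => rfl
  | symm _ _ _ ih => exact ih.symm
  | trans _ _ _ _ _ ih₁ ih₂ => exact ih₁.trans ih₂

theorem update_true_of_eq_true [DecidableEq E] (η : E → Bool) (e e' : E) (he' : η e' = true) :
    update η e true e' = true := by
  rcases eq_or_ne e' e with rfl | hne <;> simp [*]

theorem compatible.anti [DecidableEq E] {ends : E → V × V} {η : E → Bool} {e : E} {s : ℕ}
    {σ : V → Fin s} (hσ : compatible ends (update η e true) σ) :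
    compatible ends η σ :=
  fun u w h => hσ u w (h.mono fun _ _ => openRel_mono (update_true_of_eq_true η e))

theorem spinCompCount_eq_ncard (ends : E → V × V) (η : E → Bool) {s : ℕ} (σ : V → Fin s)
    (i : Fin s) :
    spinCompCount ends η σ i = {c | ∃ z, Quot.mk (openRel ends η) z = c ∧ σ z = i}.ncard := rfl

end Components

section AddEdge

variable {V E : Type} [DecidableEq E] (ends : E → V × V) (η : E → Bool) (e : E)

def addEdgeMap : Quot (openRel ends η) → Quot (openRel ends (update η e true)) :=
  Quot.map id fun _ _ => openRel_mono (update_true_of_eq_true η e)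

theorem addEdgeMap_mk (u : V) :
    addEdgeMap ends η e (Quot.mk _ u) = Quot.mk _ u := rfl

theorem addEdgeMap_surjective : Surjective (addEdgeMap ends η e) :=
  Quot.ind fun u => ⟨Quot.mk _ u, rfl⟩

theorem addEdgeMap_mk_fst_eq_snd :
    addEdgeMap ends η e (Quot.mk _ (ends e).1) = addEdgeMap ends η e (Quot.mk _ (ends e).2) :=
  Quot.sound ⟨e, update_self e true η, rfl, rfl⟩

open Classical in
theorem exists_comp_addEdgeMap_eq_ite :
    ∃ ψ : Quot (openRel ends (update η e true)) → Quot (openRel ends η), ∀ c,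
      ψ (addEdgeMap ends η e c) =
        if c = Quot.mk _ (ends e).2 then Quot.mk _ (ends e).1 else c := by
  refine ⟨Quot.lift (fun u => if Quot.mk (openRel ends η) u = Quot.mk _ (ends e).2
    then Quot.mk _ (ends e).1 else Quot.mk _ u) ?_, Quot.ind fun u => rfl⟩
  rintro _ _ ⟨e', he', rfl, rfl⟩
  rcases eq_or_ne e' e with rfl | hne
  · simp
  · have : Quot.mk _ (ends e').1 = Quot.mk (openRel ends η) (ends e').2 :=
      Quot.sound ⟨e', by rwa [update_of_ne hne] at he', rfl, rfl⟩
    simp only [this]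

theorem addEdgeMap_injOn : Set.InjOn (addEdgeMap ends η e) {Quot.mk _ (ends e).2}ᶜ := by
  obtain ⟨ψ, hψ⟩ := exists_comp_addEdgeMap_eq_ite ends η e
  intro c hc c' hc' h
  simpa [hψ, Set.mem_compl_singleton_iff.mp hc, Set.mem_compl_singleton_iff.mp hc'] using
    congrArg ψ h

theorem addEdgeMap_injective
    (h : Quot.mk (openRel ends η) (ends e).1 = Quot.mk _ (ends e).2) :
    Injective (addEdgeMap ends η e) := by
  obtain ⟨ψ, hψ⟩ := exists_comp_addEdgeMap_eq_ite ends η e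
  refine LeftInverse.injective (g := ψ) fun c => ?_
  rw [hψ]
  split_ifs with hc
  exacts [h.trans hc.symm, rfl]

variable [Finite V]

open Classical in
theorem ncard_preimage_addEdgeMap (S : Set (Quot (openRel ends (update η e true)))) :
    (addEdgeMap ends η e ⁻¹' S).ncard = S.ncard +
      if Quot.mk (openRel ends η) (ends e).1 ≠ Quot.mk _ (ends e).2 ∧
        addEdgeMap ends η e (Quot.mk _ (ends e).2) ∈ S then 1 else 0 := by
  by_cases h : Quot.mk (openRel ends η) (ends e).1 = Quot.mk _ (ends e).2
  · rw [if_neg (not_and_of_not_left _ (not_not.mpr h)), add_zero]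
    exact Set.ncard_preimage_of_injective_subset_range (addEdgeMap_injective ends η e h)
      ((addEdgeMap_surjective ends η e).range_eq ▸ Set.subset_univ S)
  · rw [Set.ncard_preimage_of_injOn_compl_singleton (addEdgeMap_surjective ends η e) h
      (addEdgeMap_mk_fst_eq_snd ends η e) (addEdgeMap_injOn ends η e) S]
    simp [h]

open Classical in
theorem numComp_eq_numComp_update_add :
    numComp ends η = numComp ends (update η e true) +
      if Quot.mk (openRel ends η) (ends e).1 ≠ Quot.mk _ (ends e).2 then 1 else 0 := by
  simpa [numComp] using ncard_preimage_addEdgeMap ends η e Set.univ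

open Classical in
theorem spinCompCount_eq_spinCompCount_update_add {s : ℕ} {σ : V → Fin s}
    (hσ : compatible ends (update η e true) σ) (i : Fin s) :
    spinCompCount ends η σ i = spinCompCount ends (update η e true) σ i +
      if Quot.mk (openRel ends η) (ends e).1 ≠ Quot.mk _ (ends e).2 ∧ σ (ends e).1 = i
      then 1 else 0 := by
  have hpre : {c | ∃ z, Quot.mk (openRel ends η) z = c ∧ σ z = i} =
      addEdgeMap ends η e ⁻¹' {c | ∃ z, Quot.mk _ z = c ∧ σ z = i} := by
    ext c
    induction c using Quot.ind with | _ u => ?_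
    exact (hσ.anti.exists_mk_eq_iff u i).trans (hσ.exists_mk_eq_iff u i).symm
  have hends : σ (ends e).1 = σ (ends e).2 :=
    hσ _ _ (EqvGen.rel _ _ ⟨e, update_self e true η, rfl, rfl⟩)
  rw [spinCompCount_eq_ncard, spinCompCount_eq_ncard, hpre, ncard_preimage_addEdgeMap]
  simp [addEdgeMap_mk, hσ.exists_mk_eq_iff, hends]

end AddEdge

open Classical in
noncomputable def dacWeight {V E : Type} [Fintype E] (ends : E → V × V) (p q : ℝ) {s : ℕ}
    (a : Fin s → ℝ) (σ : V → Fin s) (η : E → Bool) : ℝ :=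
  if compatible ends η σ then rcWeight ends p q η * ∏ i, a i ^ spinCompCount ends η σ i else 0

def VertexIsolated {V E : Type} (ends : E → V × V) (η : E → Bool) (v : V) : Prop :=
  ∀ e, (ends e).1 = v ∨ (ends e).2 = v → η e = false

section Weights

variable {V E : Type} [Fintype E] (ends : E → V × V) {p q : ℝ}

theorem dacP_eq_dacWeight_div [DecidableEq E] {s : ℕ} (a : Fin s → ℝ) (σ : V → Fin s)
    (η : E → Bool) :
    dacP ends p q a σ η = dacWeight ends p q a σ η / rcZ ends p q := by
  unfold dacP dacWeight rcMeasure
  split_ifs <;> ring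

theorem rcWeight_nonneg (hp : 0 ≤ p) (hp1 : p ≤ 1) (hq : 0 ≤ q) (η : E → Bool) :
    0 ≤ rcWeight ends p q η :=
  mul_nonneg (pow_nonneg hq _) (Finset.prod_nonneg fun e _ => by split_ifs <;> linarith)

theorem rcWeight_pos_of_forall_false (hp1 : p < 1) (hq : 0 < q) :
    0 < rcWeight ends p q fun _ => false :=
  mul_pos (pow_pos hq _) (Finset.prod_pos fun e _ => by simp [hp1])

theorem rcZ_pos [DecidableEq E] (hp : 0 ≤ p) (hp1 : p < 1) (hq : 0 < q) : 0 < rcZ ends p q :=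
  Finset.sum_pos' (fun η _ => rcWeight_nonneg ends hp hp1.le hq.le η)
    ⟨_, Finset.mem_univ _, rcWeight_pos_of_forall_false ends hp1 hq⟩

variable {s : ℕ} {a : Fin s → ℝ}

theorem dacWeight_nonneg (hp : 0 ≤ p) (hp1 : p ≤ 1) (hq : 0 ≤ q) (ha : ∀ i, 0 ≤ a i)
    (σ : V → Fin s) (η : E → Bool) : 0 ≤ dacWeight ends p q a σ η := by
  unfold dacWeight
  split_ifs
  · exact mul_nonneg (rcWeight_nonneg ends hp hp1 hq η)
      (Finset.prod_nonneg fun i _ => pow_nonneg (ha i) _)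
  · exact le_rfl

theorem sum_dacWeight_pos [DecidableEq E] (hp : 0 ≤ p) (hp1 : p < 1) (hq : 0 < q)
    (ha : ∀ i, 0 < a i) (σ : V → Fin s) : 0 < ∑ η, dacWeight ends p q a σ η := by
  refine Finset.sum_pos' (fun η _ => dacWeight_nonneg ends hp hp1.le hq.le (ha · |>.le) σ η)
    ⟨fun _ => false, Finset.mem_univ _, ?_⟩
  rw [dacWeight, if_pos (compatible_of_forall_false ends σ)]
  exact mul_pos (rcWeight_pos_of_forall_false ends hp1 hq)
    (Finset.prod_pos fun i _ => pow_pos (ha i) _)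

end Weights

section EdgeUpdate

variable {V E : Type} [Finite V] [Fintype E] [DecidableEq E] (ends : E → V × V) {p q : ℝ}
  (η : E → Bool) (e : E)

theorem one_sub_mul_prod_update_true (hη : η e = false) :
    (1 - p) * ∏ e', (if update η e true e' then p else 1 - p) =
      p * ∏ e', (if η e' then p else 1 - p) := by
  rw [← Finset.mul_prod_erase _ _ (Finset.mem_univ e),
    ← Finset.mul_prod_erase _ _ (Finset.mem_univ e),
    Finset.prod_congr rfl fun e' he' => by rw [update_of_ne (Finset.ne_of_mem_erase he')]]
  simp [hη]
  ring

open Classical in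
theorem rcWeight_update_true (hη : η e = false) :
    (1 - p) * (if Quot.mk (openRel ends η) (ends e).1 ≠ Quot.mk _ (ends e).2 then q else 1) *
      rcWeight ends p q (update η e true) = p * rcWeight ends p q η := by
  have hprod := one_sub_mul_prod_update_true (p := p) η e hη
  unfold rcWeight
  rw [numComp_eq_numComp_update_add ends η e]
  split_ifs
  · rw [pow_succ]; linear_combination q ^ numComp ends (update η e true) * q * hprod
  · rw [add_zero]; linear_combination q ^ numComp ends (update η e true) * hprod

open Classical in
theorem dacWeight_update_true {s : ℕ} (a : Fin s → ℝ) {σ : V → Fin s} (hη : η e = false)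
    (hσ : compatible ends (update η e true) σ) :
    (1 - p) * (if Quot.mk (openRel ends η) (ends e).1 ≠ Quot.mk _ (ends e).2
        then q * a (σ (ends e).1) else 1) * dacWeight ends p q a σ (update η e true) =
      p * dacWeight ends p q a σ η := by
  have hspin : ∏ i, a i ^ spinCompCount ends η σ i =
      (if Quot.mk (openRel ends η) (ends e).1 ≠ Quot.mk _ (ends e).2 then a (σ (ends e).1)
        else 1) * ∏ i, a i ^ spinCompCount ends (update η e true) σ i := by
    simp_rw [spinCompCount_eq_spinCompCount_update_add ends η e hσ]
    split_ifs with h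
    · simp only [h, ne_eq, not_false_eq_true, true_and]
      exact Finset.prod_pow_add_ite a _ _
    · simp [h]
  have hrc := rcWeight_update_true ends (p := p) (q := q) η e hη
  unfold dacWeight
  rw [if_pos hσ, if_pos hσ.anti, hspin]
  split_ifs at hrc ⊢
  · linear_combination
      a (σ (ends e).1) * (∏ i, a i ^ spinCompCount ends (update η e true) σ i) * hrc
  · linear_combination (∏ i, a i ^ spinCompCount ends (update η e true) σ i) * hrc

end EdgeUpdate

/-- A lower bound, valid when every `a i ≥ t`, on the DaC conditional probability that an edge
is closed given the other edges and the spins: that probability is `1 - p` if its endpoints are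
already connected and `1 - p / (p + (1 - p) q a_i)` otherwise. -/
noncomputable def edgeClosedBound (p q t : ℝ) : ℝ :=
  min (1 - p) (1 - p / (p + (1 - p) * q * t))

theorem edgeClosedBound_pos {p q t : ℝ} (hp : 0 ≤ p) (hp1 : p < 1) (hq : 0 < q) (ht : 0 < t) :
    0 < edgeClosedBound p q t := by
  have hqt : 0 < (1 - p) * q * t := by positivity
  refine lt_min (by linarith) ?_
  rw [sub_pos, div_lt_one (by linarith)]
  linarith

theorem edgeClosedBound_mul_le {p q t θ : ℝ} (hp : 0 ≤ p) (hp1 : p < 1) (hq : 0 < q)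
    (ht : 0 < t) (hθ : θ = 1 ∨ q * t ≤ θ) :
    edgeClosedBound p q t * (p + (1 - p) * θ) ≤ (1 - p) * θ := by
  have hθ0 : 0 < θ := hθ.elim (· ▸ one_pos) fun h => (mul_pos hq ht).trans_le h
  have hD : 0 < p + (1 - p) * θ := by nlinarith
  suffices h : edgeClosedBound p q t ≤ 1 - p / (p + (1 - p) * θ) by
    calc edgeClosedBound p q t * (p + (1 - p) * θ)
        ≤ (1 - p / (p + (1 - p) * θ)) * (p + (1 - p) * θ) := by gcongr
      _ = (1 - p) * θ := by field_simp; ring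
  rcases hθ with rfl | h
  · exact (min_le_left _ _).trans_eq (by field_simp; ring)
  · refine (min_le_right _ _).trans (sub_le_sub_left (div_le_div_of_nonneg_left hp ?_ ?_) 1)
    · nlinarith [mul_pos hq ht]
    · rw [mul_assoc]; nlinarith

section EdgeClosing

variable {V E : Type} [Finite V] [Fintype E] [DecidableEq E] (ends : E → V × V) {p q t : ℝ}
  {s : ℕ} {a : Fin s → ℝ}

theorem edgeClosedBound_mul_dacWeight_add_le (hp : 0 ≤ p) (hp1 : p < 1) (hq : 0 < q)
    (ht : 0 < t) (hta : ∀ i, t ≤ a i) (σ : V → Fin s) {η : E → Bool} {e : E}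
    (hη : η e = false) :
    edgeClosedBound p q t * (dacWeight ends p q a σ η + dacWeight ends p q a σ (update η e true))
      ≤ dacWeight ends p q a σ η := by
  have hW := dacWeight_nonneg ends hp hp1.le hq.le (fun i => ht.le.trans (hta i)) σ η
  have hc1 : edgeClosedBound p q t ≤ 1 := (min_le_left _ _).trans (by linarith)
  by_cases hσ : compatible ends (update η e true) σ
  · classical
    set θ := if Quot.mk (openRel ends η) (ends e).1 ≠ Quot.mk _ (ends e).2
      then q * a (σ (ends e).1) else 1 with hθ_def
    have hθ : θ = 1 ∨ q * t ≤ θ := by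
      rw [hθ_def]; split_ifs
      exacts [Or.inr (mul_le_mul_of_nonneg_left (hta _) hq.le), Or.inl rfl]
    have hθ0 : 0 < (1 - p) * θ := mul_pos (by linarith)
      (hθ.elim (· ▸ one_pos) fun h => (mul_pos hq ht).trans_le h)
    have hupd := dacWeight_update_true ends (p := p) (q := q) η e a hη hσ
    rw [← hθ_def] at hupd
    refine le_of_mul_le_mul_right ?_ hθ0
    nlinarith [edgeClosedBound_mul_le hp hp1 hq ht hθ]
  · have : dacWeight ends p q a σ (update η e true) = 0 := by rw [dacWeight, if_neg hσ]
    rw [this, add_zero]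
    exact mul_le_of_le_one_left hW hc1

end EdgeClosing

theorem pow_card_mul_sum_le_sum_forall_false {E : Type} [Fintype E] [DecidableEq E]
    (w : (E → Bool) → ℝ) {c : ℝ} (hc : 0 ≤ c)
    (hstep : ∀ η e, η e = false → c * (w η + w (update η e true)) ≤ w η) (F : Finset E) :
    c ^ F.card * ∑ η, w η ≤ ∑ η with ∀ e ∈ F, η e = false, w η := by
  induction F using Finset.induction_on with
  | empty => simp
  | insert e F he ih =>
    set S := Finset.univ.filter fun η : E → Bool => ∀ e ∈ F, η e = false
    have hflip : ∑ η ∈ S with ¬η e = false, w η =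
        ∑ η ∈ S with η e = false, w (update η e true) := by
      refine (Finset.sum_nbij' (update · e true) (update · e false) ?_ ?_ ?_ ?_ ?_).symm
      all_goals
        intro η hη
        simp only [S, Finset.mem_filter, Finset.mem_univ, true_and] at hη ⊢
      · exact ⟨fun e' he' => by rw [update_of_ne (ne_of_mem_of_not_mem he' he)]; exact hη.1 e' he',
          by simp⟩
      · exact ⟨fun e' he' => by rw [update_of_ne (ne_of_mem_of_not_mem he' he)]; exact hη.1 e' he',
          by simp⟩
      · simp [hη.2]
      · simpa using hη.2
    have hinsert : (Finset.univ.filter fun η : E → Bool => ∀ e' ∈ insert e F, η e' = false) =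
        S.filter (· e = false) := by
      ext η; simp [S, and_comm]
    calc c ^ (insert e F).card * ∑ η, w η = c * (c ^ F.card * ∑ η, w η) := by
          rw [Finset.card_insert_of_notMem he, pow_succ]; ring
      _ ≤ c * ∑ η ∈ S, w η := mul_le_mul_of_nonneg_left ih hc
      _ = ∑ η ∈ S with η e = false, c * (w η + w (update η e true)) := by
          rw [← Finset.sum_filter_add_sum_filter_not S (· e = false), hflip,
            ← Finset.sum_add_distrib, Finset.mul_sum]
      _ ≤ ∑ η ∈ S with η e = false, w η :=
          Finset.sum_le_sum fun η hη => hstep η e (Finset.mem_filter.1 hη).2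
      _ = _ := by rw [hinsert]

section Isolated

variable {V E : Type} (ends : E → V × V) {v : V} {η : E → Bool}

theorem eq_iff_eq_of_eqvGen_openRel (hv : VertexIsolated ends η v)
    {u w : V} (h : EqvGen (openRel ends η) u w) : u = v ↔ w = v := by
  induction h with
  | rel _ _ h =>
    obtain ⟨e, he, rfl, rfl⟩ := h
    constructor <;> intro h' <;> simp [hv e (by tauto)] at he
  | refl => rfl
  | symm _ _ _ ih => exact ih.symm
  | trans _ _ _ _ _ ih₁ ih₂ => exact ih₁.trans ih₂

variable [DecidableEq V] {s : ℕ}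

theorem compatible_update_of_isolated
    (hv : VertexIsolated ends η v) {τ : V → Fin s} {b b' : Fin s}
    (h : compatible ends η (update τ v b)) : compatible ends η (update τ v b') := by
  intro u w huw
  have hiff := eq_iff_eq_of_eqvGen_openRel ends hv huw
  by_cases hu : u = v
  · rw [hu, hiff.1 hu]
  · have hw : w ≠ v := fun hw => hu (hiff.2 hw)
    simpa [update_of_ne hu, update_of_ne hw] using h u w huw

theorem spinCompCount_update_of_isolated [Finite V]
    (hv : VertexIsolated ends η v) (τ : V → Fin s) (b i : Fin s) :
    spinCompCount ends η (update τ v b) i =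
      {c | ∃ z ≠ v, Quot.mk (openRel ends η) z = c ∧ τ z = i}.ncard + if b = i then 1 else 0 := by
  classical
  rw [spinCompCount_eq_ncard, Set.ncard_eq_ncard_sdiff_singleton_add_ite _ (Quot.mk _ v)]
  have hv_eq {z : V} (hz : Quot.mk (openRel ends η) z = Quot.mk _ v) : z = v :=
    (eq_iff_eq_of_eqvGen_openRel ends hv (Quot.eq.mp hz)).2 rfl
  congr 2
  · ext c
    induction c using Quot.ind with | _ u => ?_
    simp only [Set.mem_sdiff, Set.mem_ofPred_eq, Set.mem_singleton_iff]
    constructor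
    · rintro ⟨⟨z, hz, hzi⟩, hu⟩
      have hzv : z ≠ v := by rintro rfl; exact hu hz.symm
      exact ⟨z, hzv, hz, by rwa [update_of_ne hzv] at hzi⟩
    · rintro ⟨z, hzv, hz, hzi⟩
      exact ⟨⟨z, hz, by rwa [update_of_ne hzv]⟩, fun hu => hzv (hv_eq (hz.trans hu))⟩
  · refine propext ⟨fun ⟨z, hz, hzi⟩ => ?_, fun hbi => ⟨v, rfl, by simpa using hbi⟩⟩
    rw [hv_eq hz] at hzi
    simpa using hzi

variable [Finite V] [Fintype E] {p q : ℝ} {a : Fin s → ℝ}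

theorem mul_dacWeight_update_of_isolated
    (hv : VertexIsolated ends η v) (τ : V → Fin s) (b b' : Fin s) :
    a b' * dacWeight ends p q a (update τ v b) η =
      a b * dacWeight ends p q a (update τ v b') η := by
  unfold dacWeight
  by_cases h : compatible ends η (update τ v b)
  · rw [if_pos h, if_pos (compatible_update_of_isolated ends hv h)]
    simp_rw [spinCompCount_update_of_isolated ends hv, Finset.prod_pow_add_ite]
    ring
  · rw [if_neg h, if_neg fun h' => h (compatible_update_of_isolated ends hv h')]
    ring

theorem dacWeight_update_eq_mul_sum_of_isolated (hsum : ∑ i, a i = 1)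
    (hv : VertexIsolated ends η v) (τ : V → Fin s) (m : Fin s) :
    dacWeight ends p q a (update τ v m) η = a m * ∑ b, dacWeight ends p q a (update τ v b) η := by
  calc dacWeight ends p q a (update τ v m) η
      = ∑ b, a b * dacWeight ends p q a (update τ v m) η := by rw [← Finset.sum_mul, hsum, one_mul]
    _ = a m * ∑ b, dacWeight ends p q a (update τ v b) η := by
      rw [Finset.mul_sum]
      exact Finset.sum_congr rfl fun b _ => (mul_dacWeight_update_of_isolated ends hv τ b m).symm

end Isolated

theorem mul_pow_mul_sum_dacWeight_le {V E : Type} [Finite V] [DecidableEq V] [Fintype E]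
    [DecidableEq E] (ends : E → V × V) {p q t : ℝ} (hp : 0 ≤ p) (hp1 : p < 1) (hq : 0 < q)
    (ht : 0 < t) {s : ℕ} {a : Fin s → ℝ} (hta : ∀ i, t ≤ a i) (hsum : ∑ i, a i = 1)
    (τ : V → Fin s) (v : V) (m : Fin s) :
    a m * edgeClosedBound p q t ^ (Finset.univ.filter fun e => (ends e).1 = v ∨ (ends e).2 = v).card
        * ∑ b, ∑ η, dacWeight ends p q a (update τ v b) η
      ≤ ∑ η, dacWeight ends p q a (update τ v m) η := by
  set c := edgeClosedBound p q t
  set F := Finset.univ.filter fun e => (ends e).1 = v ∨ (ends e).2 = v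
  have ha : ∀ i, 0 ≤ a i := fun i => ht.le.trans (hta i)
  have hclosing (b : Fin s) : c ^ F.card * ∑ η, dacWeight ends p q a (update τ v b) η ≤
      ∑ η with ∀ e ∈ F, η e = false, dacWeight ends p q a (update τ v b) η :=
    pow_card_mul_sum_le_sum_forall_false _ (edgeClosedBound_pos hp hp1 hq ht).le
      (fun _ _ hη => edgeClosedBound_mul_dacWeight_add_le ends hp hp1 hq ht hta _ hη) F
  calc a m * c ^ F.card * ∑ b, ∑ η, dacWeight ends p q a (update τ v b) η
      = a m * ∑ b, c ^ F.card * ∑ η, dacWeight ends p q a (update τ v b) η := by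
        rw [mul_assoc, Finset.mul_sum]
    _ ≤ a m * ∑ b, ∑ η with ∀ e ∈ F, η e = false, dacWeight ends p q a (update τ v b) η := by
        gcongr with b
        · exact ha m
        · exact hclosing b
    _ = ∑ η with ∀ e ∈ F, η e = false, dacWeight ends p q a (update τ v m) η := by
        rw [Finset.sum_comm, Finset.mul_sum]
        refine Finset.sum_congr rfl fun η hη => ?_
        refine (dacWeight_update_eq_mul_sum_of_isolated ends hsum (fun e he => ?_) τ m).symm
        exact (Finset.mem_filter.1 hη).2 e (by simpa [F] using he)
    _ ≤ ∑ η, dacWeight ends p q a (update τ v m) η :=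
        Finset.sum_le_sum_of_subset_of_nonneg (Finset.filter_subset _ _)
          fun η _ _ => dacWeight_nonneg ends hp hp1.le hq.le ha _ η

/-- uniform nonnullness of the DaC model on a finite graph. For
every vertex `v`, spin `m`, and spin configuration `σ` off `v`, the conditional
probability that `v` receives spin `m` given spins `σ` elsewhere is at least
`ε = (min_i a_i)·(min{1-p, 1-p/(p+(1-p)q·min_i a_i)})^{deg v} > 0`. -/
theorem dac_uniformly_nonnull {V E : Type}
    [Fintype V] [DecidableEq V] [Fintype E] [DecidableEq E]
    (ends : E → V × V) (p q : ℝ) (hp : p ∈ Set.Ico (0 : ℝ) 1) (hq : 0 < q)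
    (s : ℕ) (hs : 2 ≤ s) (a : Fin s → ℝ) (ha : ∀ i, a i ∈ Set.Ioo (0 : ℝ) 1)
    (hsum : ∑ i : Fin s, a i = 1)
    (v : V) (m : Fin s) (σ : {w : V // w ≠ v} → Fin s) :
    let ext : Fin s → V → Fin s := fun b w => if h : w = v then b else σ ⟨w, h⟩
    let deg : ℕ := (Finset.univ.filter fun e : E => (ends e).1 = v ∨ (ends e).2 = v).card
    let amin : ℝ := ⨅ i, a i
    let ε : ℝ := amin * min (1 - p) (1 - p / (p + (1 - p) * q * amin)) ^ deg
    0 < ε ∧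
      ε ≤ (∑ η : E → Bool, dacP ends p q a (ext m) η)
            / (∑ b : Fin s, ∑ η : E → Bool, dacP ends p q a (ext b) η) := by
  intro ext deg amin ε
  obtain ⟨hp0, hp1⟩ := hp
  have : Nonempty (Fin s) := ⟨⟨0, by omega⟩⟩
  have ha0 (i : Fin s) : 0 < a i := (ha i).1
  have hamin (i : Fin s) : amin ≤ a i := ciInf_le (Set.finite_range a).bddBelow i
  have hamin0 : 0 < amin := by
    obtain ⟨j, hj⟩ := exists_eq_ciInf_of_finite (f := a)
    exact (ha0 j).trans_eq hj
  set τ : V → Fin s := fun w => if h : w = v then m else σ ⟨w, h⟩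
  have hext (b : Fin s) : ext b = update τ v b := by
    funext w
    by_cases h : w = v <;> simp [ext, τ, h]
  have hc := edgeClosedBound_pos hp0 hp1 hq hamin0
  refine ⟨mul_pos hamin0 (pow_pos hc _), ?_⟩
  have hY : 0 < ∑ b, ∑ η, dacWeight ends p q a (update τ v b) η :=
    Finset.sum_pos (fun b _ => sum_dacWeight_pos ends hp0 hp1 hq ha0 _) Finset.univ_nonempty
  simp only [dacP_eq_dacWeight_div, ← Finset.sum_div,
    div_div_div_cancel_right₀ (rcZ_pos ends hp0 hp1 hq).ne', hext, le_div_iff₀ hY]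
  calc amin * edgeClosedBound p q amin ^ deg * _ ≤ a m * edgeClosedBound p q amin ^ deg * _ := by
        gcongr
        exact hamin m
    _ ≤ _ := mul_pow_mul_sum_dacWeight_le ends hp0 hp1 hq hamin0 hamin hsum τ v m
end
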